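/- Suppose −1 < α < 0, q = 0, and |M| ≤ N. Then an admissible u is a global minimizer of ∫_Ω H_TF if and only if u₁(x) + u₋₁(x) = √n and u₀(x)² = 2·u₁(x)·u₋₁(x) for almost every x ∈ Ω. -/

import Mathlib

/-!
For `α < 0` the sign is `s = -1`, and with `ρ = u₁² + u₀² + u₋₁²` and `D = u₀² - 2u₁u₋₁` the energy
density is `H_TF = (1+α)/2 · ρ² + (-α)/2 · D²`. Writing `ρ² = (ρ - n)² + 2nρ - n²` and using
`∫ ρ = N = n|Ω|` gives `∫ H_TF = ∫ [(1+α)/2 · (ρ - n)² + (-α)/2 · D²] + (1+α)/2 · nN`, with a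
nonnegative integrand. A constant state with `ρ = n`, `D = 0` and magnetization `m` exists when
`|m| ≤ n`, so the minimizers are exactly the states with `ρ = n` and `D = 0` a.e.; for nonnegative
components, `ρ = (u₁ + u₋₁)² + D` turns this into the stated conditions.
-/

open MeasureTheory

noncomputable section

abbrev E3 := EuclideanSpace ℝ (Fin 3)

/-- The sign `s`: `1` if `α ≥ 0`, `-1` otherwise. -/
def sgn' (α : ℝ) : ℝ := if 0 ≤ α then 1 else -1

/-- Thomas–Fermi energy density; coordinates: `v 0 = u₁`, `v 1 = u₀`, `v 2 = u₋₁`. -/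
def HTF (α q : ℝ) (v : Fin 3 → ℝ) : ℝ :=
  (1/2) * (v 0 ^ 2 + v 1 ^ 2 + v 2 ^ 2) ^ 2
    + (α/2) * (2 * v 1 ^ 2 * (v 0 - sgn' α * v 2) ^ 2 + (v 0 ^ 2 - v 2 ^ 2) ^ 2)
    + q * (v 0 ^ 2 + v 2 ^ 2)

/-- Admissibility: `u ∈ L⁴(Ω; ℝ³)`, nonnegative components a.e. on `Ω`,
with prescribed total mass `N` and total magnetization `M`. -/
structure Admissible (Ω : Set E3) (N M : ℝ) (u : E3 → Fin 3 → ℝ) : Prop where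
  memL4 : MemLp u 4 (volume.restrict Ω)
  nonneg : ∀ᵐ x ∂(volume.restrict Ω), ∀ i, 0 ≤ u x i
  mass : ∫ x in Ω, (u x 0 ^ 2 + u x 1 ^ 2 + u x 2 ^ 2) = N
  mag : ∫ x in Ω, (u x 0 ^ 2 - u x 2 ^ 2) = M

/-- `u` is a global minimizer of `∫_Ω H_TF` among admissible functions. -/
def IsMinimizer (Ω : Set E3) (α q N M : ℝ) (u : E3 → Fin 3 → ℝ) : Prop :=
  Admissible Ω N M u ∧
    ∀ v : E3 → Fin 3 → ℝ, Admissible Ω N M v →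
      ∫ x in Ω, HTF α q (u x) ≤ ∫ x in Ω, HTF α q (v x)

def totalDensity (v : Fin 3 → ℝ) : ℝ := v 0 ^ 2 + v 1 ^ 2 + v 2 ^ 2

def pairingDefect (v : Fin 3 → ℝ) : ℝ := v 1 ^ 2 - 2 * v 0 * v 2

def magnetization (v : Fin 3 → ℝ) : ℝ := v 0 ^ 2 - v 2 ^ 2

def excessEnergy (α n : ℝ) (v : Fin 3 → ℝ) : ℝ :=
  (1 + α) / 2 * (totalDensity v - n) ^ 2 + -α / 2 * pairingDefect v ^ 2

section Pointwise

variable {α n : ℝ} {v : Fin 3 → ℝ}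

lemma totalDensity_eq_sq_add_pairingDefect (v : Fin 3 → ℝ) :
    totalDensity v = (v 0 + v 2) ^ 2 + pairingDefect v := by
  unfold totalDensity pairingDefect; ring

lemma HTF_eq_excessEnergy_add (hα : α < 0) (n : ℝ) (v : Fin 3 → ℝ) :
    HTF α 0 v = excessEnergy α n v + (1 + α) / 2 * (2 * n * totalDensity v - n ^ 2) := by
  simp only [HTF, sgn', if_neg (not_le.mpr hα), excessEnergy, totalDensity, pairingDefect]
  ring

lemma excessEnergy_nonneg (hα₁ : -1 ≤ α) (hα₀ : α ≤ 0) (n : ℝ) (v : Fin 3 → ℝ) :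
    0 ≤ excessEnergy α n v := by
  unfold excessEnergy
  have : 0 ≤ 1 + α := by linarith
  have : 0 ≤ -α := by linarith
  positivity

lemma excessEnergy_eq_zero_iff (hα₁ : -1 < α) (hα₀ : α < 0) :
    excessEnergy α n v = 0 ↔ totalDensity v = n ∧ pairingDefect v = 0 := by
  have h₁ : 0 < (1 + α) / 2 := by linarith
  have h₂ : 0 < -α / 2 := by linarith
  rw [excessEnergy, add_eq_zero_iff_of_nonneg (by positivity) (by positivity),
    mul_eq_zero_iff_left h₁.ne', mul_eq_zero_iff_left h₂.ne', sq_eq_zero_iff, sq_eq_zero_iff,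
    sub_eq_zero]

lemma totalDensity_eq_and_pairingDefect_eq_zero_iff (h₀ : 0 ≤ v 0) (h₂ : 0 ≤ v 2) (hn : 0 ≤ n) :
    totalDensity v = n ∧ pairingDefect v = 0 ↔ v 0 + v 2 = √n ∧ v 1 ^ 2 = 2 * v 0 * v 2 := by
  rw [totalDensity_eq_sq_add_pairingDefect, pairingDefect, sub_eq_zero]
  constructor
  · rintro ⟨hρ, hD⟩
    rw [hD, sub_self, add_zero] at hρ
    exact ⟨by rw [← hρ, Real.sqrt_sq (by positivity)], hD⟩
  · rintro ⟨hs, hD⟩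
    rw [hs, hD, sub_self, add_zero, Real.sq_sqrt hn]
    exact ⟨rfl, rfl⟩

lemma exists_ground_state {m : ℝ} (hn : 0 < n) (hm : |m| ≤ n) :
    ∃ w : Fin 3 → ℝ, (∀ i, 0 ≤ w i) ∧ totalDensity w = n ∧ pairingDefect w = 0 ∧
      magnetization w = m := by
  obtain ⟨hm₁, hm₂⟩ := abs_le.mp hm
  have hs : 0 < √n := Real.sqrt_pos.mpr hn
  set a := (n + m) / (2 * √n)
  set c := (n - m) / (2 * √n)
  have ha : 0 ≤ a := div_nonneg (by linarith) (by positivity)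
  have hc : 0 ≤ c := div_nonneg (by linarith) (by positivity)
  have hsum : a + c = √n := by
    simp only [a, c]; field_simp; linear_combination -2 * Real.sq_sqrt hn.le
  have hdiff : a - c = m / √n := by simp only [a, c]; field_simp; ring
  set w : Fin 3 → ℝ := ![a, √(2 * a * c), c]
  have hw : ∀ i, 0 ≤ w i := by
    intro i; fin_cases i
    exacts [ha, Real.sqrt_nonneg _, hc]
  obtain ⟨hρ, hD⟩ := (totalDensity_eq_and_pairingDefect_eq_zero_iff (hw 0) (hw 2) hn.le).mpr
    ⟨hsum, Real.sq_sqrt (by positivity)⟩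
  refine ⟨w, hw, hρ, hD, ?_⟩
  calc magnetization w = (a + c) * (a - c) := by simp only [magnetization, w, Matrix.cons_val]; ring
    _ = m := by rw [hsum, hdiff, mul_div_cancel₀ _ hs.ne']

end Pointwise

section Integrability

variable {X : Type*} [MeasurableSpace X] {μ : Measure X} {u : X → Fin 3 → ℝ}

instance : ENNReal.HolderTriple 4 4 2 :=
  ⟨by rw [← ENNReal.add_halves 2⁻¹, ENNReal.div_eq_inv_mul, ← ENNReal.mul_inv (by simp) (by simp)]
      norm_num⟩

lemma MeasureTheory.MemLp.eval_mul_eval {ι : Type*} [Fintype ι] {f : X → ι → ℝ}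
    (hf : MemLp f 4 μ) (i j : ι) :
    MemLp (fun x => f x i * f x j) 2 μ :=
  (hf.eval j).mul' (hf.eval i)

lemma memLp_totalDensity (hu : MemLp u 4 μ) : MemLp (fun x => totalDensity (u x)) 2 μ := by
  convert ((hu.eval_mul_eval 0 0).add (hu.eval_mul_eval 1 1)).add (hu.eval_mul_eval 2 2) using 1
  funext x
  simp only [totalDensity, Pi.add_apply, sq]

lemma memLp_pairingDefect (hu : MemLp u 4 μ) : MemLp (fun x => pairingDefect (u x)) 2 μ := by
  convert (hu.eval_mul_eval 1 1).sub ((hu.eval_mul_eval 0 2).const_mul 2) using 1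
  funext x
  simp only [pairingDefect, Pi.sub_apply, sq, mul_assoc]

lemma integrable_excessEnergy [IsFiniteMeasure μ] (hu : MemLp u 4 μ) (α n : ℝ) :
    Integrable (fun x => excessEnergy α n (u x)) μ :=
  (((memLp_totalDensity hu).sub (memLp_const n)).integrable_sq.const_mul _).add
    ((memLp_pairingDefect hu).integrable_sq.const_mul _)

end Integrability

section Minimizers

variable {Ω : Set E3} [IsFiniteMeasure (volume.restrict Ω)] {α N M n : ℝ}

lemma admissible_const {w : Fin 3 → ℝ} (hw : ∀ i, 0 ≤ w i)
    (hN : totalDensity w * (volume Ω).toReal = N) (hM : magnetization w * (volume Ω).toReal = M) :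
    Admissible Ω N M (fun _ => w) where
  memL4 := memLp_const w
  nonneg := .of_forall fun _ => hw
  mass := by rw [setIntegral_const, smul_eq_mul, measureReal_def, mul_comm]; exact hN
  mag := by rw [setIntegral_const, smul_eq_mul, measureReal_def, mul_comm]; exact hM

lemma integral_HTF_eq (hα : α < 0) (hnN : n * (volume Ω).toReal = N) {v : E3 → Fin 3 → ℝ}
    (hv : Admissible Ω N M v) :
    ∫ x in Ω, HTF α 0 (v x) = (∫ x in Ω, excessEnergy α n (v x)) + (1 + α) / 2 * (n * N) := by
  have hρ : Integrable (fun x => totalDensity (v x)) (volume.restrict Ω) :=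
    (memLp_totalDensity hv.memL4).integrable one_le_two
  have hmass : ∫ x in Ω, totalDensity (v x) = N := hv.mass
  have hlin : Integrable (fun x => (1 + α) / 2 * (2 * n * totalDensity (v x) - n ^ 2))
      (volume.restrict Ω) := ((hρ.const_mul _).sub (integrable_const _)).const_mul _
  simp_rw [HTF_eq_excessEnergy_add hα n]
  rw [integral_add (integrable_excessEnergy hv.memL4 α n) hlin,
    integral_const_mul, integral_sub (hρ.const_mul _) (integrable_const _), integral_const_mul,
    hmass, setIntegral_const, smul_eq_mul, measureReal_def, ← hnN]
  ring

lemma isMinimizer_iff_excessEnergy_ae_eq_zero (hα₁ : -1 ≤ α) (hα₀ : α < 0)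
    (hnN : n * (volume Ω).toReal = N) {w : E3 → Fin 3 → ℝ} (hw : Admissible Ω N M w)
    (hw₀ : ∀ x, excessEnergy α n (w x) = 0) {u : E3 → Fin 3 → ℝ} (hu : Admissible Ω N M u) :
    IsMinimizer Ω α 0 N M u ↔ (fun x => excessEnergy α n (u x)) =ᵐ[volume.restrict Ω] 0 := by
  have hnonneg (v : E3 → Fin 3 → ℝ) : 0 ≤ fun x => excessEnergy α n (v x) :=
    fun x => excessEnergy_nonneg hα₁ hα₀.le n (v x)
  rw [← integral_eq_zero_iff_of_nonneg (hnonneg u) (integrable_excessEnergy hu.memL4 α n)]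
  constructor
  · rintro ⟨-, hmin⟩
    have hle := hmin w hw
    rw [integral_HTF_eq hα₀ hnN hu, integral_HTF_eq hα₀ hnN hw] at hle
    simp only [hw₀, integral_zero, zero_add, add_le_iff_nonpos_left] at hle
    exact le_antisymm hle (integral_nonneg (hnonneg u))
  · intro h₀
    refine ⟨hu, fun v hv => ?_⟩
    rw [integral_HTF_eq hα₀ hnN hu, integral_HTF_eq hα₀ hnN hv, h₀, zero_add]
    exact le_add_of_nonneg_left (integral_nonneg (hnonneg v))

end Minimizers

theorem ferro_q0_general
    (Ω : Set E3) (hΩb : Bornology.IsBounded Ω)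
    (hΩpos : 0 < volume Ω)
    (α q N M n m : ℝ)
    (hN : 0 < N)
    (hn : n = N / (volume Ω).toReal) (hm : m = M / (volume Ω).toReal)
    (hαl : -1 < α) (hαu : α < 0) (hq : q = 0) (hM : |M| ≤ N)
    (u : E3 → Fin 3 → ℝ) (hu : Admissible Ω N M u) :
    IsMinimizer Ω α q N M u ↔
      ∀ᵐ x ∂(volume.restrict Ω), u x 0 + u x 2 = Real.sqrt n ∧ u x 1 ^ 2 = 2 * u x 0 * u x 2 := by
  subst hq
  have hΩfin : volume Ω ≠ ⊤ := hΩb.measure_lt_top.ne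
  have := isFiniteMeasure_restrict.2 hΩfin
  have hV : 0 < (volume Ω).toReal := ENNReal.toReal_pos hΩpos.ne' hΩfin
  have hnN : n * (volume Ω).toReal = N := by rw [hn, div_mul_cancel₀ _ hV.ne']
  have hmM : m * (volume Ω).toReal = M := by rw [hm, div_mul_cancel₀ _ hV.ne']
  have hn₀ : 0 < n := hn ▸ div_pos hN hV
  have hmn : |m| ≤ n := by
    rw [hm, hn, abs_div, abs_of_pos hV]; exact div_le_div_of_nonneg_right hM hV.le
  obtain ⟨w, hw, hwρ, hwD, hwm⟩ := exists_ground_state hn₀ hmn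
  rw [isMinimizer_iff_excessEnergy_ae_eq_zero hαl.le hαu hnN
    (admissible_const hw (hwρ ▸ hnN) (hwm ▸ hmM))
    (fun _ => (excessEnergy_eq_zero_iff hαl hαu).mpr ⟨hwρ, hwD⟩) hu]
  refine Filter.eventually_congr (hu.nonneg.mono fun x hx => ?_)
  rw [Pi.zero_apply, excessEnergy_eq_zero_iff hαl hαu,
    totalDensity_eq_and_pairingDefect_eq_zero_iff (hx 0) (hx 2) hn₀.le]

/-- Ferromagnetic `q = 0`: minimizers are exactly the functions with `u₁ + u₋₁ = √n` and `u₀² = 2u₁u₋₁` a.e. -/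
theorem ferro_q0
    (Ω : Set E3) (hΩm : MeasurableSet Ω) (hΩb : Bornology.IsBounded Ω)
    (hΩpos : 0 < volume Ω)
    (α q N M n m : ℝ)
    (hN : 0 < N)
    (hn : n = N / (volume Ω).toReal) (hm : m = M / (volume Ω).toReal)
    (hαl : -1 < α) (hαu : α < 0) (hq : q = 0) (hM : |M| ≤ N)
    (u : E3 → Fin 3 → ℝ) (hu : Admissible Ω N M u) :
    IsMinimizer Ω α q N M u ↔
      ∀ᵐ x ∂(volume.restrict Ω), u x 0 + u x 2 = Real.sqrt n ∧ u x 1 ^ 2 = 2 * u x 0 * u x 2 :=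
  ferro_q0_general Ω hΩb hΩpos α q N M n m hN hn hm hαl hαu hq hM u hu
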